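/- Let $\{\Delta_1, \dots, \Delta_s\}$ be a generalized nef partition of $\Delta$ and let $\nabla_j = \{ n \in N_{\mathbb{R}} : \langle m, n \rangle \geq -\delta_{i,j} \text{ for all } m \in \Delta_i, \ i = 1, \dots, s\}$ and $\nabla = \nabla_1 + \cdots + \nabla_s$. Then $\nabla = \bigcap_{i=1}^s \Delta_i^\circ$. -/

import Mathlib

open scoped RealInnerProductSpace Pointwise

namespace GNPPaper

variable {d s : ℕ}

abbrev E (d : ℕ) := EuclideanSpace ℝ (Fin d)

/-- Polar with the paper's sign convention `⟨x,y⟩ ≥ -1`. -/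
def pol (A : Set (E d)) : Set (E d) := {y | ∀ x ∈ A, (-1 : ℝ) ≤ (inner ℝ x y : ℝ)}

/-- Vertices = extreme points. -/
def Vert (A : Set (E d)) : Set (E d) := Set.extremePoints ℝ A

/-- Indicator function of a set. -/
noncomputable def ind (I : Set (E d)) (v : E d) : ℝ := I.indicator (fun _ => 1) v

/-- The piece `Δ_i` associated to a part `I` of the vertices of the polar of `A`. -/
def pieceD (A : Set (E d)) (I : Set (E d)) : Set (E d) :=
  {m | ∀ v ∈ Vert (pol A), -(ind I v) ≤ (inner ℝ m v : ℝ)}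

def IsPolytope (A : Set (E d)) : Prop :=
  ∃ F : Finset (E d), A = convexHull ℝ (F : Set (E d))

def IsVertPartition (A : Set (E d)) (I : Fin s → Set (E d)) : Prop :=
  (∀ i, I i ⊆ Vert (pol A)) ∧ ∀ v ∈ Vert (pol A), ∃! i, v ∈ I i

/-- `I` induces a generalized nef partition of `A`. -/
def IsGNP (A : Set (E d)) (I : Fin s → Set (E d)) : Prop :=
  IsPolytope A ∧ (0 : E d) ∈ interior A ∧ IsVertPartition A I ∧
    (∑ i, pieceD A (I i)) = A

/-- The dual piece `∇_j`. -/
def pieceN (A : Set (E d)) (I : Fin s → Set (E d)) (j : Fin s) : Set (E d) :=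
  {y | ∀ i : Fin s, ∀ m ∈ pieceD A (I i), -(if i = j then (1:ℝ) else 0) ≤ (inner ℝ m y : ℝ)}

def nab (A : Set (E d)) (I : Fin s → Set (E d)) : Set (E d) := ∑ j, pieceN A I j

/-- A facet: a nonempty proper face of codimension one. -/
def IsFacet (A F : Set (E d)) : Prop :=
  IsExtreme ℝ A F ∧ F.Nonempty ∧ F ≠ A ∧
    Module.finrank ℝ ↥(vectorSpan ℝ F) + 1 = d

/-- Cone of nonnegative real combinations of elements of `S`. -/
def coneOf (S : Set (E d)) : Set (E d) :=
  {x | ∃ (t : Finset (E d)) (c : E d → ℝ), (t : Set (E d)) ⊆ S ∧ (∀ v, 0 ≤ c v) ∧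
      x = ∑ v ∈ t, c v • v}

def IsLatticeSet (S : Set (E d)) : Prop := ∀ v ∈ S, ∀ k : Fin d, ∃ z : ℤ, v k = (z : ℝ)

/-- A full-dimensional simplex. -/
def IsSimplex (S : Set (E d)) : Prop :=
  ∃ F : Finset (E d), S = convexHull ℝ (F : Set (E d)) ∧ F.card = d + 1 ∧
    AffineIndependent ℝ (fun v : F => (v : E d))

/-- Good pair of generalized nef partitions. -/
def IsGoodPair (A1 A2 : Set (E d)) (I1 I2 : Fin s → Set (E d)) : Prop :=
  IsGNP A1 I1 ∧ IsGNP A2 I2 ∧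
  (∀ i, pieceD A1 (I1 i) ⊆ pieceD A2 (I2 i)) ∧
  (∀ i, IsLatticeSet (Vert (pieceD A1 (I1 i)))) ∧
  IsLatticeSet (Vert A1) ∧ IsLatticeSet (Vert (pol A2)) ∧
  (0 : E d) ∈ interior A1 ∧ (0 : E d) ∈ interior (pol A2)

/-! ### Auxiliary lemmas -/

lemma ind_nonneg (J : Set (E d)) (v : E d) : 0 ≤ ind J v := by
  classical
  rw [ind, Set.indicator_apply]
  split <;> norm_num

lemma zero_mem_pieceN (A : Set (E d)) (I : Fin s → Set (E d)) (j : Fin s) :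
    (0 : E d) ∈ pieceN A I j := by
  intro i m _
  rw [inner_zero_right]
  split <;> norm_num

lemma zero_mem_nab (A : Set (E d)) (I : Fin s → Set (E d)) : (0 : E d) ∈ nab A I := by
  have h0 : (0 : E d) = ∑ j : Fin s, (0 : E d) := by simp
  rw [nab, h0]
  exact Set.finset_sum_mem_finset_sum _ _ _ fun j _ => zero_mem_pieceN A I j

lemma pol_closed (A : Set (E d)) : IsClosed (pol A) := by
  have h : pol A = ⋂ x ∈ A, {y : E d | (-1 : ℝ) ≤ (inner ℝ x y : ℝ)} := by
    ext y; simp [pol, Set.mem_iInter]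
  rw [h]
  exact isClosed_biInter fun x _ =>
    isClosed_le continuous_const (continuous_const.inner continuous_id)

lemma pol_convex (A : Set (E d)) : Convex ℝ (pol A) := by
  intro y₁ h1 y₂ h2 a b ha hb hab x hx
  have e1 := h1 x hx
  have e2 := h2 x hx
  rw [inner_add_right, real_inner_smul_right, real_inner_smul_right]
  nlinarith

/-- The core decomposition: if `p` lies in the convex hull of a set `V` of vertices of `pol A`
on which the `g i` take the exact values `-ind (I i)`, then `t⁻¹ • p` decomposes into pieces. -/
lemma decomp_of_mem_convexHull (A : Set (E d)) (I : Fin s → Set (E d)) [Nonempty (Fin s)]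
    (σ : E d → Fin s)
    (hind : ∀ v ∈ Vert (pol A), ∀ j, ind (I j) v = if σ v = j then 1 else 0)
    (g : Fin s → E d) (t R' : ℝ) (htpos : 0 < t) (hR'nn : 0 ≤ R')
    (V : Set (E d)) (hVsub : V ⊆ Vert (pol A))
    (hforce : ∀ v ∈ V, ∀ i, (inner ℝ (g i) v : ℝ) = -(ind (I i) v))
    (hVbound : ∀ v ∈ V, ‖v‖ ≤ R')
    (p : E d) (hp : p ∈ convexHull ℝ V) :
    ∃ y : Fin s → E d, (∑ i, y i) = t⁻¹ • p ∧ (∀ i, ‖y i‖ ≤ t⁻¹ * R') ∧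
      (∀ i j : Fin s, ∀ m' ∈ pieceD A (I j),
        (if i = j then (t⁻¹ * (inner ℝ (g i) p : ℝ)) else 0) ≤ (inner ℝ m' (y i) : ℝ)) := by
  classical
  rw [convexHull_eq] at hp
  obtain ⟨ι, tt, w, z, hw0, hw1, hz, hcm⟩ := hp
  rw [Finset.centerMass_eq_of_sum_1 _ _ hw1] at hcm
  have hzV : ∀ ρ ∈ tt, z ρ ∈ Vert (pol A) := fun ρ hρ => hVsub (hz ρ hρ)
  refine ⟨fun i => ∑ ρ ∈ tt.filter (fun ρ => σ (z ρ) = i), (t⁻¹ * w ρ) • z ρ, ?_, ?_, ?_⟩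
  · rw [Finset.sum_fiberwise tt (fun ρ => σ (z ρ)) (fun ρ => (t⁻¹ * w ρ) • z ρ), ← hcm,
      Finset.smul_sum]
    exact Finset.sum_congr rfl fun ρ _ => by rw [mul_smul]
  · intro i
    calc ‖∑ ρ ∈ tt.filter (fun ρ => σ (z ρ) = i), (t⁻¹ * w ρ) • z ρ‖
        ≤ ∑ ρ ∈ tt.filter (fun ρ => σ (z ρ) = i), ‖(t⁻¹ * w ρ) • z ρ‖ := norm_sum_le _ _
      _ ≤ ∑ ρ ∈ tt.filter (fun ρ => σ (z ρ) = i), (t⁻¹ * w ρ) * R' := by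
          refine Finset.sum_le_sum fun ρ hρ => ?_
          have hρt := Finset.mem_filter.1 hρ |>.1
          have hwρ : 0 ≤ w ρ := hw0 ρ hρt
          rw [norm_smul, Real.norm_eq_abs,
            abs_of_nonneg (mul_nonneg (inv_nonneg.2 htpos.le) hwρ)]
          exact mul_le_mul_of_nonneg_left (hVbound _ (hz ρ hρt))
            (mul_nonneg (inv_nonneg.2 htpos.le) hwρ)
      _ = t⁻¹ * R' * ∑ ρ ∈ tt.filter (fun ρ => σ (z ρ) = i), w ρ := by
          rw [Finset.mul_sum]; exact Finset.sum_congr rfl fun ρ _ => by ring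
      _ ≤ t⁻¹ * R' * 1 := by
          refine mul_le_mul_of_nonneg_left ?_
            (mul_nonneg (inv_nonneg.2 htpos.le) hR'nn)
          · rw [← hw1]
            exact Finset.sum_le_sum_of_subset_of_nonneg (Finset.filter_subset _ _)
              (fun ρ hρ _ => hw0 ρ hρ)
      _ = t⁻¹ * R' := mul_one _
  · intro i j m' hm'
    rw [inner_sum]
    simp_rw [real_inner_smul_right]
    by_cases hij : i = j
    · subst hij
      rw [if_pos rfl]
      have hL : t⁻¹ * (inner ℝ (g i) p : ℝ)
          = ∑ ρ ∈ tt.filter (fun ρ => σ (z ρ) = i), (t⁻¹ * w ρ) * (-(ind (I i) (z ρ))) := by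
        rw [← hcm, inner_sum, Finset.mul_sum, Finset.sum_filter]
        refine Finset.sum_congr rfl fun ρ hρ => ?_
        rw [real_inner_smul_right, hforce (z ρ) (hz ρ hρ) i, hind (z ρ) (hzV ρ hρ) i]
        by_cases hσρ : σ (z ρ) = i
        · rw [if_pos hσρ, if_pos hσρ]; ring
        · rw [if_neg hσρ, if_neg hσρ]; ring
      rw [hL]
      refine Finset.sum_le_sum fun ρ hρ => ?_
      have hρt := Finset.mem_filter.1 hρ |>.1
      exact mul_le_mul_of_nonneg_left (hm' (z ρ) (hzV ρ hρt))
        (mul_nonneg (inv_nonneg.2 htpos.le) (hw0 ρ hρt))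
    · rw [if_neg hij]
      refine Finset.sum_nonneg fun ρ hρ => ?_
      obtain ⟨hρt, hρσ⟩ := Finset.mem_filter.1 hρ
      have hind0 : ind (I j) (z ρ) = 0 := by
        rw [hind (z ρ) (hzV ρ hρt) j, if_neg (by rw [hρσ]; exact hij)]
      have := hm' (z ρ) (hzV ρ hρt)
      rw [hind0] at this
      exact mul_nonneg (mul_nonneg (inv_nonneg.2 htpos.le) (hw0 ρ hρt)) (by linarith)

set_option maxHeartbeats 1000000

/-- `∇ = ⋂_i Δ_i°`. -/
theorem nab_eq_iInter_pol (A : Set (E d)) (I : Fin s → Set (E d)) (hGNP : IsGNP A I) :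
    nab A I = ⋂ i : Fin s, pol (pieceD A (I i)) := by
  classical
  obtain ⟨hpoly, h0int, ⟨hIsub, hpart⟩, hsum⟩ := hGNP
  apply Set.Subset.antisymm
  · -- ∇ ⊆ ⋂ Δᵢ°
    intro n hn
    rw [nab, Set.mem_fintype_sum] at hn
    obtain ⟨g, hg, hgsum⟩ := hn
    rw [Set.mem_iInter]
    intro i m hm
    rw [← hgsum, inner_sum]
    have h1 : (-1 : ℝ) = ∑ j : Fin s, -(if i = j then (1:ℝ) else 0) := by simp
    rw [h1]
    exact Finset.sum_le_sum fun j _ => hg j i m hm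
  · -- ⋂ Δᵢ° ⊆ ∇
    intro n hn
    have hn' : ∀ i : Fin s, ∀ m ∈ pieceD A (I i), (-1 : ℝ) ≤ (inner ℝ m n : ℝ) := fun i =>
      Set.mem_iInter.1 hn i
    by_cases hn0 : n = 0
    · subst hn0; exact zero_mem_nab A I
    -- setup
    obtain ⟨F, hF⟩ := hpoly
    have hAcpt : IsCompact A := hF ▸ F.finite_toSet.isCompact_convexHull ℝ
    have h0A : (0 : E d) ∈ A := interior_subset h0int
    obtain ⟨r, hr⟩ := hAcpt.isBounded.subset_closedBall 0
    set R : ℝ := max r 1 with hR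
    have hRpos : (0:ℝ) < R := lt_of_lt_of_le one_pos (le_max_right _ _)
    have hRA : ∀ x ∈ A, ‖x‖ ≤ R := fun x hx =>
      le_trans (mem_closedBall_zero_iff.1 (hr hx)) (le_max_left _ _)
    obtain ⟨ε₀, hε₀pos, hball⟩ := Metric.mem_nhds_iff.1 (mem_interior_iff_mem_nhds.1 h0int)
    have hballA : Metric.ball (0 : E d) ε₀ ⊆ A := hball
    -- the case s = 0 is impossible for n ≠ 0
    rcases Nat.eq_zero_or_pos s with hs0 | hspos
    · exfalso
      apply hn0
      have hA0 : A = 0 := by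
        rw [← hsum]
        subst hs0
        simp
      set c : ℝ := ε₀ / (2 * (‖n‖ + 1)) with hc
      have hcpos : 0 < c := by positivity
      have hmem : c • n ∈ A := by
        apply hballA
        rw [mem_ball_zero_iff, norm_smul, Real.norm_eq_abs, abs_of_pos hcpos]
        have h1 : ‖n‖ < ‖n‖ + 1 := by linarith
        calc c * ‖n‖ < c * (‖n‖ + 1) := by
              exact mul_lt_mul_of_pos_left h1 hcpos
          _ = ε₀ / 2 := by rw [hc]; field_simp
          _ < ε₀ := by linarith
      rw [hA0] at hmem
      have : c • n = 0 := hmem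
      rcases smul_eq_zero.1 this with h | h
      · exact absurd h (ne_of_gt hcpos)
      · exact h
    haveI : Nonempty (Fin s) := Fin.pos_iff_nonempty.1 hspos
    -- assignment of vertices to parts
    set σ : E d → Fin s := fun v => if h : ∃ i, v ∈ I i then h.choose else Classical.arbitrary _
      with hσdef
    have hσmem : ∀ v ∈ Vert (pol A), v ∈ I (σ v) := by
      intro v hv
      obtain ⟨i, hi, _⟩ := hpart v hv
      have hex : ∃ i, v ∈ I i := ⟨i, hi⟩
      rw [hσdef]
      simp only [dif_pos hex]
      exact hex.choose_spec
    have hσuniq : ∀ v ∈ Vert (pol A), ∀ j, v ∈ I j → j = σ v := by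
      intro v hv j hj
      obtain ⟨i, _, hu⟩ := hpart v hv
      rw [hu j hj, hu (σ v) (hσmem v hv)]
    have hind : ∀ v ∈ Vert (pol A), ∀ j, ind (I j) v = if σ v = j then 1 else 0 := by
      intro v hv j
      rw [ind, Set.indicator_apply]
      by_cases h : v ∈ I j
      · rw [if_pos h, if_pos (hσuniq v hv j h).symm]
      · rw [if_neg h, if_neg fun he => h (by rw [← he]; exact hσmem v hv)]
    -- bound on pol A
    set R' : ℝ := 2 / ε₀ with hR'
    have hR'pos : 0 < R' := by positivity
    have hpolbound : ∀ y ∈ pol A, ‖y‖ ≤ R' := by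
      intro y hy
      by_cases hy0 : y = 0
      · rw [hy0, norm_zero]; positivity
      · have hynorm : (0:ℝ) < ‖y‖ := norm_pos_iff.2 hy0
        have hxA : (-(ε₀ / 2 * ‖y‖⁻¹)) • y ∈ A := by
          apply hballA
          rw [mem_ball_zero_iff, norm_smul, Real.norm_eq_abs, abs_neg,
            abs_of_pos (by positivity : (0:ℝ) < ε₀ / 2 * ‖y‖⁻¹)]
          rw [mul_assoc, inv_mul_cancel₀ (ne_of_gt hynorm), mul_one]
          linarith
        have hkey := hy _ hxA
        rw [real_inner_smul_left, real_inner_self_eq_norm_sq] at hkey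
        have hns : ‖y‖⁻¹ * ‖y‖ ^ 2 = ‖y‖ := by
          field_simp [pow_two]
        have : (-1 : ℝ) ≤ -(ε₀ / 2 * ‖y‖) := by
          calc (-1 : ℝ) ≤ -(ε₀ / 2 * ‖y‖⁻¹) * ‖y‖ ^ 2 := hkey
            _ = -(ε₀ / 2 * (‖y‖⁻¹ * ‖y‖ ^ 2)) := by ring
            _ = -(ε₀ / 2 * ‖y‖) := by rw [hns]
        rw [hR']
        rw [le_div_iff₀ hε₀pos]
        nlinarith
    -- the supremum scaling
    have hnn : (0:ℝ) < ‖n‖ := norm_pos_iff.2 hn0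
    have hball' : ∀ y : E d, ‖y‖ ≤ 1 / R → y ∈ pol A := by
      intro y hy x hx
      have habs := abs_real_inner_le_norm x y
      have h2 : ‖x‖ * ‖y‖ ≤ 1 := by
        calc ‖x‖ * ‖y‖ ≤ R * (1 / R) := by
              exact mul_le_mul (hRA x hx) hy (norm_nonneg _) hRpos.le
          _ = 1 := by field_simp
      have := neg_abs_le (inner ℝ x y : ℝ)
      linarith
    set T : Set ℝ := {u : ℝ | 0 ≤ u ∧ u • n ∈ pol A} with hTdef
    have hT0 : (1/(R * ‖n‖)) ∈ T := by
      constructor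
      · positivity
      · apply hball'
        rw [norm_smul, Real.norm_eq_abs, abs_of_pos (by positivity)]
        have : 1 / (R * ‖n‖) * ‖n‖ = 1 / R := by field_simp
        rw [this]
    have hTne : T.Nonempty := ⟨_, hT0⟩
    have hTbdd : BddAbove T := by
      refine ⟨R' / ‖n‖, fun u hu => ?_⟩
      obtain ⟨hu0, hupol⟩ := hu
      have := hpolbound _ hupol
      rw [norm_smul, Real.norm_eq_abs, abs_of_nonneg hu0] at this
      rw [le_div_iff₀ hnn]
      exact this
    have hTclosed : IsClosed T := by
      have hTeq : T = Set.Ici (0:ℝ) ∩ (fun u : ℝ => u • n) ⁻¹' (pol A) := by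
        ext u
        simp [hTdef, Set.mem_Ici]
      rw [hTeq]
      exact isClosed_Ici.inter ((pol_closed A).preimage (continuous_id.smul continuous_const))
    set t := sSup T with htdef
    have htT : t ∈ T := hTclosed.csSup_mem hTne hTbdd
    have htpos : 0 < t :=
      lt_of_lt_of_le (by positivity : (0:ℝ) < 1/(R * ‖n‖)) (le_csSup hTbdd hT0)
    have htn : t • n ∈ pol A := htT.2
    -- find m ∈ A with ⟨m, t•n⟩ = -1
    have hm : ∃ m ∈ A, (inner ℝ m (t • n) : ℝ) = -1 := by
      by_contra hcon
      push_neg at hcon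
      have hcont : ContinuousOn (fun x : E d => (inner ℝ x (t • n) : ℝ)) A :=
        (Continuous.inner continuous_id continuous_const).continuousOn
      obtain ⟨m₀, hm₀A, hmin⟩ := hAcpt.exists_isMinOn ⟨0, h0A⟩ hcont
      set μ : ℝ := (inner ℝ m₀ (t • n) : ℝ) with hμ
      have hμgt : -1 < μ := lt_of_le_of_ne (htn m₀ hm₀A) (Ne.symm (hcon m₀ hm₀A))
      set c : ℝ := (μ + 1)/2 with hc
      have hcpos : 0 < c := by rw [hc]; linarith
      have hmemT : (1 + c) * t ∈ T := by
        constructor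
        · positivity
        · intro x hx
          have hxge : μ ≤ (inner ℝ x (t • n) : ℝ) := isMinOn_iff.1 hmin x hx
          have heq : (inner ℝ x (((1+c)*t) • n) : ℝ) = (1 + c) * (inner ℝ x (t • n) : ℝ) := by
            rw [mul_smul, real_inner_smul_right]
          rw [heq]
          rcases le_or_gt 0 (inner ℝ x (t • n) : ℝ) with h | h
          · nlinarith
          · have hge := htn x hx
            have h1 : (1 + c) * μ ≤ (1 + c) * (inner ℝ x (t • n) : ℝ) :=
              mul_le_mul_of_nonneg_left hxge (by linarith)
            have h2 : (0:ℝ) ≤ (μ + 1) * (μ + 2) := by nlinarith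
            have h3 : (-1 : ℝ) ≤ (1 + c) * μ := by rw [hc]; nlinarith
            linarith
      have hle : (1 + c) * t ≤ t := le_csSup hTbdd hmemT
      nlinarith
    obtain ⟨m, hmA, hmface⟩ := hm
    -- the exposed face
    set Fc : Set (E d) := {x ∈ pol A | (inner ℝ m x : ℝ) = -1} with hFcdef
    have htnF : t • n ∈ Fc := ⟨htn, hmface⟩
    have hFcclosed : IsClosed Fc := by
      have : Fc = pol A ∩ {x : E d | (inner ℝ m x : ℝ) = -1} := rfl
      rw [this]
      exact (pol_closed A).inter
        (isClosed_eq (continuous_const.inner continuous_id) continuous_const)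
    have hFccpt : IsCompact Fc := by
      apply Metric.isCompact_of_isClosed_isBounded hFcclosed
      apply (Metric.isBounded_closedBall (x := (0 : E d)) (r := R')).subset
      intro x hx
      rw [Metric.mem_closedBall, dist_zero_right]
      exact hpolbound x hx.1
    have hFcconv : Convex ℝ Fc := by
      intro y₁ h1 y₂ h2 a b ha hb hab
      refine ⟨pol_convex A h1.1 h2.1 ha hb hab, ?_⟩
      rw [inner_add_right, real_inner_smul_right, real_inner_smul_right, h1.2, h2.2]
      ring_nf
      linarith [hab]
    have hexp : IsExposed ℝ (pol A) Fc := by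
      intro _
      refine ⟨-(innerSL ℝ m), ?_⟩
      ext x
      simp only [hFcdef, Set.mem_setOf_eq, ContinuousLinearMap.neg_apply, innerSL_apply_apply,
        innerSL_apply_apply, neg_le_neg_iff]
      constructor
      · rintro ⟨hx, he⟩
        exact ⟨hx, fun y hy => by rw [he]; exact hy m hmA⟩
      · rintro ⟨hx, hall⟩
        refine ⟨hx, le_antisymm ?_ (hx m hmA)⟩
        have := hall (t • n) htn
        rw [hmface] at this
        exact this
    have hVsub : Set.extremePoints ℝ Fc ⊆ Vert (pol A) :=
      hexp.isExtreme.extremePoints_subset_extremePoints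
    -- Krein-Milman
    have hKM : t • n ∈ closure (convexHull ℝ (Set.extremePoints ℝ Fc)) := by
      rw [closure_convexHull_extremePoints hFccpt hFcconv]
      exact htnF
    obtain ⟨p, hpmem, hptend⟩ := mem_closure_iff_seq_limit.1 hKM
    -- decomposition of m
    have hmA' := hmA
    rw [← hsum, Set.mem_fintype_sum] at hmA'
    obtain ⟨g, hgmem, hgsum⟩ := hmA'
    -- equalities forced on extreme points of the face
    have hforce : ∀ v ∈ Set.extremePoints ℝ Fc, ∀ i, (inner ℝ (g i) v : ℝ) = -(ind (I i) v) := by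
      intro v hv i
      have hvV : v ∈ Vert (pol A) := hVsub hv
      have hvFc : v ∈ Fc := extremePoints_subset hv
      have hsum1 : ∑ j, (inner ℝ (g j) v : ℝ) = -1 := by
        rw [← sum_inner, hgsum]; exact hvFc.2
      have hindsum : ∑ j, ind (I j) v = 1 := by
        calc ∑ j, ind (I j) v = ∑ j, if σ v = j then (1:ℝ) else 0 :=
              Finset.sum_congr rfl fun j _ => hind v hvV j
          _ = 1 := by simp
      have hkey : ∑ j, ((inner ℝ (g j) v : ℝ) + ind (I j) v) = 0 := by
        rw [Finset.sum_add_distrib, hsum1, hindsum]; ring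
      have hnneg : ∀ j ∈ Finset.univ, (0:ℝ) ≤ (inner ℝ (g j) v : ℝ) + ind (I j) v := by
        intro j _
        have := hgmem j v hvV
        linarith
      have := (Finset.sum_eq_zero_iff_of_nonneg hnneg).1 hkey i (Finset.mem_univ i)
      linarith
    -- per-k decompositions
    have hdecomp : ∀ k : ℕ, ∃ y : Fin s → E d, (∑ i, y i) = t⁻¹ • p k ∧
        (∀ i, ‖y i‖ ≤ t⁻¹ * R') ∧
        (∀ i j : Fin s, ∀ m' ∈ pieceD A (I j),
          (if i = j then (t⁻¹ * (inner ℝ (g i) (p k) : ℝ)) else 0) ≤ (inner ℝ m' (y i) : ℝ)) := by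
      intro k
      exact decomp_of_mem_convexHull A I σ hind g t R' htpos hR'pos.le
        (Set.extremePoints ℝ Fc) hVsub hforce
        (fun v hv => hpolbound v (extremePoints_subset hv).1) (p k) (hpmem k)
    choose y hy1 hy2 hy3 using hdecomp
    -- compactness: extract a convergent subsequence
    have hKcpt : IsCompact (Set.pi Set.univ fun _ : Fin s => Metric.closedBall (0 : E d) (t⁻¹ * R')) :=
      isCompact_univ_pi fun _ => isCompact_closedBall _ _
    obtain ⟨ylim, _, φ, hφmono, hφtend⟩ := hKcpt.tendsto_subseq (x := y)
      (fun k => Set.mem_univ_pi.2 fun i => by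
        rw [Metric.mem_closedBall, dist_zero_right]; exact hy2 k i)
    have hcomp : ∀ i, Filter.Tendsto (fun k => y (φ k) i) Filter.atTop (nhds (ylim i)) :=
      fun i => (tendsto_pi_nhds.1 hφtend) i
    have hptend' : Filter.Tendsto (fun k => p (φ k)) Filter.atTop (nhds (t • n)) :=
      hptend.comp hφmono.tendsto_atTop
    -- the sums converge to n
    have hsumtend : Filter.Tendsto (fun k => ∑ i, y (φ k) i) Filter.atTop (nhds (∑ i, ylim i)) :=
      tendsto_finset_sum _ fun i _ => hcomp i
    have hsumtend' : Filter.Tendsto (fun k => ∑ i, y (φ k) i) Filter.atTop (nhds n) := by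
      have heq : (fun k => ∑ i, y (φ k) i) = fun k => t⁻¹ • p (φ k) :=
        funext fun k => hy1 (φ k)
      rw [heq]
      have h2 := hptend'.const_smul t⁻¹
      have h3 : t⁻¹ • t • n = n := inv_smul_smul₀ (ne_of_gt htpos) n
      rw [h3] at h2
      exact h2
    have hsumeq : ∑ i, ylim i = n := tendsto_nhds_unique hsumtend hsumtend'
    -- each limit lies in the corresponding ∇ piece
    have hylimN : ∀ i, ylim i ∈ pieceN A I i := by
      intro i i' m' hm'
      have htend1 : Filter.Tendsto (fun k => (inner ℝ m' (y (φ k) i) : ℝ)) Filter.atTop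
          (nhds (inner ℝ m' (ylim i) : ℝ)) :=
        ((continuous_const.inner continuous_id).tendsto _).comp (hcomp i)
      have htend2 : Filter.Tendsto
          (fun k => (if i = i' then (t⁻¹ * (inner ℝ (g i) (p (φ k)) : ℝ)) else 0))
          Filter.atTop (nhds (if i = i' then (inner ℝ (g i) n : ℝ) else 0)) := by
        by_cases hii : i = i'
        · simp only [if_pos hii]
          have h1 : Filter.Tendsto (fun k => (inner ℝ (g i) (p (φ k)) : ℝ)) Filter.atTop
              (nhds (inner ℝ (g i) (t • n) : ℝ)) :=
            ((continuous_const.inner continuous_id).tendsto _).comp hptend'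
          have h2 := h1.const_mul t⁻¹
          have h3 : t⁻¹ * (inner ℝ (g i) (t • n) : ℝ) = (inner ℝ (g i) n : ℝ) := by
            rw [real_inner_smul_right, inv_mul_cancel_left₀ (ne_of_gt htpos)]
          rw [h3] at h2
          exact h2
        · simp only [if_neg hii]
          exact tendsto_const_nhds
      have hle : ∀ k, (if i = i' then (t⁻¹ * (inner ℝ (g i) (p (φ k)) : ℝ)) else 0)
          ≤ (inner ℝ m' (y (φ k) i) : ℝ) := fun k => hy3 (φ k) i i' m' hm'
      have hfin : (if i = i' then (inner ℝ (g i) n : ℝ) else 0) ≤ (inner ℝ m' (ylim i) : ℝ) :=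
        le_of_tendsto_of_tendsto' htend2 htend1 hle
      by_cases hii : i = i'
      · rw [if_pos hii] at hfin
        rw [if_pos hii.symm]
        have := hn' i (g i) (hgmem i)
        linarith
      · rw [if_neg hii] at hfin
        rw [if_neg fun h => hii h.symm]
        linarith
    rw [nab, ← hsumeq]
    exact Set.finset_sum_mem_finset_sum _ _ _ fun i _ => hylimN i

end GNPPaper
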